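/- arXiv:2601.22298 — 5 statements merged into one kernel-verified Lean document; each statement's English description precedes it below -/
import Mathlib

section
/- Let Z_1, …, Z_{n+1} be real-valued exchangeable random variables that are almost surely pairwise distinct. Then for every β ∈ [0,1], β ≤ P( Z_{n+1} ≤ Q_β(Z_1, …, Z_n, +∞) ) ≤ β + 1/(n+1), where the empirical quantile is computed over the n+1 values Z_1, …, Z_n together with +∞. -/
open MeasureTheory

/-- Exchangeability: for every permutation `π`, the joint law of the permuted family
equals the joint law of the original family. -/
def Exchangeable {Ω : Type*} [MeasurableSpace Ω] (P : Measure Ω)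
    {m : ℕ} {α : Type*} [MeasurableSpace α] (Z : Fin m → Ω → α) : Prop :=
  ∀ π : Equiv.Perm (Fin m),
    Measure.map (fun ω => fun i => Z (π i) ω) P = Measure.map (fun ω => fun i => Z i ω) P

/-- Empirical `β`-quantile of extended-real values `z 1, …, z m`:
`inf { x ∈ ℝ : (1/m) · #{ i : z i ≤ x } ≥ β }`, with `inf ∅ = +∞` (in `EReal`). -/
noncomputable def empQuantile {m : ℕ} (z : Fin m → EReal) (β : ℝ) : EReal :=
  sInf ((fun r : ℝ => (r : EReal)) ''
    {r : ℝ | β ≤ ((Finset.univ.filter (fun i => z i ≤ (r : EReal))).card : ℝ) / m})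

/-- The empirical `β`-quantile of the `n + 1` values `z 1, …, z n, +∞`. -/
noncomputable def augQuantile {n : ℕ} (z : Fin n → ℝ) (β : ℝ) : EReal :=
  empQuantile (Fin.snoc (fun i => ((z i : ℝ) : EReal)) ⊤) β

/-!
Whether `Z_{n+1} ≤ Q_β(Z_1, …, Z_n, +∞)` depends only on the rank of `Z_{n+1}` (the number of
values strictly below it): it holds iff that rank is `< k := ⌈β (n + 1)⌉`. By exchangeability all
`n + 1` ranks satisfy this with the same probability, and since a.s. the ranks are a permutation of
`0, …, n`, exactly `k` of them do. Hence the probability is `k / (n + 1) ∈ [β, β + 1 / (n + 1)]`.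
-/

open Finset
open scoped ENNReal

section Rank

variable {α : Type*} [LinearOrder α] {m : ℕ}

def rank (v : Fin m → α) (j : Fin m) : ℕ := #{i | v i < v j}

lemma rank_lt_rank {v : Fin m → α} {i j : Fin m} (h : v i < v j) : rank v i < rank v j :=
  card_lt_card <| (ssubset_iff_of_subset fun l hl => by
    simp only [mem_filter, mem_univ, true_and] at hl ⊢; exact hl.trans h).2
    ⟨i, by simpa using h, by simp⟩

lemma rank_lt_card (v : Fin m → α) (j : Fin m) : rank v j < m := by
  simpa [rank] using card_lt_card (filter_ssubset.2 ⟨j, mem_univ j, lt_irrefl (v j)⟩)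

lemma rank_injective {v : Fin m → α} (hv : Function.Injective v) :
    Function.Injective (rank v) := by
  intro i j h
  rcases lt_trichotomy (v i) (v j) with hlt | heq | hgt
  · exact absurd h (rank_lt_rank hlt).ne
  · exact hv heq
  · exact absurd h (rank_lt_rank hgt).ne'

lemma image_rank {v : Fin m → α} (hv : Function.Injective v) :
    univ.image (rank v) = range m :=
  eq_of_subset_of_card_le (fun _ hr => by
      obtain ⟨j, -, rfl⟩ := mem_image.1 hr
      exact mem_range.2 (rank_lt_card v j))
    (by simp [card_image_of_injective _ (rank_injective hv)])

-- With pairwise distinct entries the ranks are a permutation of `0, …, m - 1`.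
lemma card_rank_lt {v : Fin m → α} (hv : Function.Injective v) {k : ℕ} (hk : k ≤ m) :
    #{j | rank v j < k} = k := by
  classical
  rw [← card_image_of_injective _ (rank_injective hv), ← filter_image (p := (· < k)),
    image_rank hv]
  have : (range m).filter (· < k) = range k := by
    ext r; simp only [mem_filter, mem_range]; omega
  simp [this]

lemma rank_comp_perm (v : Fin m → α) (π : Equiv.Perm (Fin m)) (j : Fin m) :
    rank (v ∘ π) j = rank v (π j) :=
  card_equiv π (by simp)

lemma rank_last (v : Fin (m + 1) → α) :
    rank v (Fin.last m) = #{i : Fin m | v i.castSucc < v (Fin.last m)} := by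
  simp only [rank, card_filter, Fin.sum_univ_castSucc, lt_irrefl, if_false, add_zero]

lemma measurable_rank [TopologicalSpace α] [MeasurableSpace α] [OpensMeasurableSpace α]
    [SecondCountableTopology α] [OrderClosedTopology α] (j : Fin m) :
    Measurable fun v : Fin m → α => rank v j := by
  simp only [rank, card_filter]
  exact Finset.measurable_sum _ fun i _ =>
    Measurable.ite (measurableSet_lt (measurable_pi_apply i) (measurable_pi_apply j))
      measurable_const measurable_const

end Rank

section Quantile

lemma coe_le_empQuantile_iff {m : ℕ} (z : Fin m → EReal) (β t : ℝ) :
    (t : EReal) ≤ empQuantile z β ↔ (#{i | z i < t} : ℝ) / m < β := by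
  -- a real `r < t` above every `z i < t` sees exactly the entries below `t`
  obtain ⟨r, hr, hrt⟩ : ∃ r : ℝ, ({i | z i < t} : Finset _).sup z < r ∧ (r : EReal) < t :=
    EReal.lt_iff_exists_real_btwn.1
      ((Finset.sup_lt_iff (EReal.bot_lt_coe t)).2 fun i hi => (mem_filter.1 hi).2)
  have hcount : #{i | z i ≤ r} = #{i | z i < t} := by
    congr 1; ext i; simp only [mem_filter, mem_univ, true_and]
    exact ⟨fun h => h.trans_lt hrt, fun h => (le_sup (mem_filter.2 ⟨mem_univ i, h⟩)).trans hr.le⟩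
  simp only [empQuantile, le_sInf_iff, Set.forall_mem_image, Set.mem_ofPred_eq,
    EReal.coe_le_coe_iff]
  constructor
  · intro h
    by_contra! hβ
    exact absurd (h (hcount ▸ hβ)) (not_le.2 (EReal.coe_lt_coe_iff.1 hrt))
  · intro h s hs
    by_contra! hst
    have hle : #{i | z i ≤ s} ≤ #{i | z i < t} := card_le_card fun i hi => by
      simp only [mem_filter, mem_univ, true_and] at hi ⊢
      exact hi.trans_lt (EReal.coe_lt_coe_iff.2 hst)
    have := div_le_div_of_nonneg_right (Nat.cast_le (α := ℝ).2 hle) m.cast_nonneg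
    linarith

lemma coe_le_augQuantile_iff {n : ℕ} (z : Fin n → ℝ) (β t : ℝ) :
    (t : EReal) ≤ augQuantile z β ↔ (#{i | z i < t} : ℝ) / (n + 1) < β := by
  have hcount : #{i | (Fin.snoc (fun i => (z i : EReal)) ⊤ : Fin (n + 1) → EReal) i < t} =
      #{i | z i < t} := by
    simp only [card_filter, Fin.sum_univ_castSucc, Fin.snoc_castSucc, Fin.snoc_last, not_top_lt,
      if_false, add_zero, EReal.coe_lt_coe_iff]
  rw [augQuantile, coe_le_empQuantile_iff, hcount]
  push_cast
  rfl

end Quantile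

section Exchangeable

variable {Ω : Type*} [MeasurableSpace Ω] {P : Measure Ω}

lemma sum_measure_eq_of_ae_card_eq {ι : Type*} [Fintype ι] {A : ι → Set Ω}
    [∀ j, DecidablePred (· ∈ A j)] (hA : ∀ j, MeasurableSet (A j)) {k : ℕ}
    (h : ∀ᵐ ω ∂P, #{j | ω ∈ A j} = k) :
    ∑ j, P (A j) = k * P Set.univ := by
  calc ∑ j, P (A j) = ∫⁻ ω, ∑ j, (A j).indicator 1 ω ∂P := by
        rw [lintegral_finsetSum _ fun j _ => measurable_one.indicator (hA j)]
        simp only [lintegral_indicator_one (hA _)]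
    _ = ∫⁻ _, (k : ℝ≥0∞) ∂P := lintegral_congr_ae <| h.mono fun ω hω => by
        simp only [Set.indicator_apply, Pi.one_apply, sum_boole, hω]
    _ = k * P Set.univ := lintegral_const _

variable {α : Type*} [MeasurableSpace α] {m : ℕ} {Z : Fin m → Ω → α}

lemma Exchangeable.measure_comp_perm_mem (hZ : Exchangeable P Z)
    (hmeas : ∀ i, Measurable (Z i)) (π : Equiv.Perm (Fin m)) {S : Set (Fin m → α)}
    (hS : MeasurableSet S) :
    P {ω | (fun i => Z (π i) ω) ∈ S} = P {ω | (fun i => Z i ω) ∈ S} := by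
  have := congrArg (· S) (hZ π)
  rwa [Measure.map_apply (measurable_pi_lambda _ fun i => hmeas (π i)) hS,
    Measure.map_apply (measurable_pi_lambda _ hmeas) hS] at this

variable [TopologicalSpace α] [OpensMeasurableSpace α] [SecondCountableTopology α] [LinearOrder α]
  [OrderClosedTopology α]

lemma Exchangeable.measure_rank_lt_eq (hZ : Exchangeable P Z) (hmeas : ∀ i, Measurable (Z i))
    (j j' : Fin m) (k : ℕ) :
    P {ω | rank (fun i => Z i ω) j' < k} = P {ω | rank (fun i => Z i ω) j < k} := by
  have hS : MeasurableSet {v : Fin m → α | rank v j < k} := measurable_rank j measurableSet_Iio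
  have hset : {ω | rank (fun i => Z i ω) j' < k} =
      {ω | (fun i => Z (Equiv.swap j j' i) ω) ∈ {v | rank v j < k}} := by
    ext ω
    change rank _ j' < k ↔ rank ((fun i => Z i ω) ∘ Equiv.swap j j') j < k
    rw [rank_comp_perm, Equiv.swap_apply_left]
  rw [hset, hZ.measure_comp_perm_mem hmeas _ hS]
  rfl

lemma Exchangeable.measure_rank_lt [IsProbabilityMeasure P] (hZ : Exchangeable P Z)
    (hmeas : ∀ i, Measurable (Z i)) (hdist : ∀ᵐ ω ∂P, Function.Injective fun i => Z i ω)
    {k : ℕ} (hk : k ≤ m) (j : Fin m) :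
    m * P {ω | rank (fun i => Z i ω) j < k} = k := by
  have hA (j : Fin m) : MeasurableSet {ω | rank (fun i => Z i ω) j < k} :=
    (measurable_rank j).comp (measurable_pi_lambda _ hmeas) measurableSet_Iio
  have hsum := sum_measure_eq_of_ae_card_eq hA (hdist.mono fun ω hω => card_rank_lt hω hk)
  simpa [hZ.measure_rank_lt_eq hmeas j] using hsum

end Exchangeable

theorem stmt0 {Ω : Type*} [MeasurableSpace Ω] (P : Measure Ω) [IsProbabilityMeasure P]
    (n : ℕ) (Z : Fin (n + 1) → Ω → ℝ) (hmeas : ∀ i, Measurable (Z i))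
    (hexch : Exchangeable P Z)
    (hdist : ∀ᵐ ω ∂P, ∀ i j : Fin (n + 1), i ≠ j → Z i ω ≠ Z j ω)
    (β : ℝ) (hβ0 : 0 ≤ β) (hβ1 : β ≤ 1) :
    ENNReal.ofReal β ≤
        P {ω | (Z (Fin.last n) ω : EReal) ≤
            augQuantile (fun i : Fin n => Z (Fin.castSucc i) ω) β} ∧
      P {ω | (Z (Fin.last n) ω : EReal) ≤
            augQuantile (fun i : Fin n => Z (Fin.castSucc i) ω) β} ≤
        ENNReal.ofReal (β + 1 / (n + 1)) := by
  have hn : (0 : ℝ) < n + 1 := by positivity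
  set k := ⌈β * (n + 1)⌉₊ with hk_def
  have hk : k ≤ n + 1 := Nat.ceil_le.2 (by push_cast; nlinarith)
  have hevent : {ω | (Z (Fin.last n) ω : EReal) ≤
      augQuantile (fun i : Fin n => Z (Fin.castSucc i) ω) β} =
      {ω | rank (fun i => Z i ω) (Fin.last n) < k} := by
    ext ω
    simp only [Set.mem_ofPred_eq, coe_le_augQuantile_iff, rank_last, hk_def, Nat.lt_ceil,
      div_lt_iff₀ hn]
  have hinj : ∀ᵐ ω ∂P, Function.Injective fun i => Z i ω :=
    hdist.mono fun ω hω i j hij => by_contra fun hne => hω i j hne hij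
  have hP : P {ω | rank (fun i => Z i ω) (Fin.last n) < k} = ENNReal.ofReal (k / (n + 1)) := by
    have := hexch.measure_rank_lt hmeas hinj hk (Fin.last n)
    have hcast : ENNReal.ofReal (n + 1) = ((n + 1 : ℕ) : ℝ≥0∞) := by
      exact_mod_cast ENNReal.ofReal_natCast (n + 1)
    rw [ENNReal.ofReal_div_of_pos hn, ENNReal.ofReal_natCast, ← this, hcast,
      mul_comm, ENNReal.mul_div_cancel_right (by simp) (by simp)]
  rw [hevent, hP]
  refine ⟨ENNReal.ofReal_le_ofReal ((le_div_iff₀ hn).2 (Nat.le_ceil _)),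
    ENNReal.ofReal_le_ofReal ((div_le_iff₀ hn).2 ?_)⟩
  rw [add_mul, one_div_mul_cancel hn.ne']
  exact (Nat.ceil_lt_add_one (by positivity)).le
end

section
/- Let Z_1, …, Z_{n+1} be real-valued exchangeable random variables (not necessarily almost surely distinct). Then for every β ∈ [0,1], P( Z_{n+1} ≤ Q_β(Z_1, …, Z_n, +∞) ) ≥ β, where the empirical quantile is computed over the n+1 values Z_1, …, Z_n together with +∞. -/
open MeasureTheory Finset
open scoped ENNReal

lemma countLemma {m k : ℕ} (hk1 : 1 ≤ k) (hkm : k ≤ m) (z : Fin m → ℝ) :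
    k ≤ (univ.filter (fun i => ((univ.filter (fun j => z j < z i)).card < k))).card := by
  classical
  set c : ℝ → ℕ := fun x => (univ.filter (fun j => z j ≤ x)).card with hc
  have hm : 0 < m := lt_of_lt_of_le hk1 hkm
  have huniv : (univ : Finset (Fin m)).Nonempty := univ_nonempty_iff.mpr (Fin.pos_iff_nonempty.mp hm)
  set s : Finset ℝ := (univ.image z).filter (fun x => k ≤ c x) with hs
  have hsne : s.Nonempty := by
    obtain ⟨i₀, _, hi₀⟩ := exists_max_image univ z huniv
    refine ⟨z i₀, mem_filter.mpr ⟨mem_image_of_mem z (mem_univ i₀), ?_⟩⟩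
    calc k ≤ m := hkm
    _ = (univ : Finset (Fin m)).card := by simp
    _ ≤ c (z i₀) := by
        apply card_le_card
        intro j _
        exact mem_filter.mpr ⟨mem_univ j, hi₀ j (mem_univ j)⟩
  set x₀ := s.min' hsne with hx₀
  have hx₀mem := s.min'_mem hsne
  have hkc : k ≤ c x₀ := (mem_filter.mp hx₀mem).2
  have key : (univ.filter (fun j => z j < x₀)).card < k := by
    by_contra h
    push_neg at h
    have hne : (univ.filter (fun j => z j < x₀)).Nonempty := by
      rw [← card_pos]; exact lt_of_lt_of_le hk1 h
    obtain ⟨j₀, hj₀mem, hj₀⟩ := exists_max_image _ z hne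
    have hj₀lt : z j₀ < x₀ := (mem_filter.mp hj₀mem).2
    have : z j₀ ∈ s := by
      refine mem_filter.mpr ⟨mem_image_of_mem z (mem_univ j₀), ?_⟩
      calc k ≤ (univ.filter (fun j => z j < x₀)).card := h
      _ ≤ c (z j₀) := by
          apply card_le_card
          intro j hj
          exact mem_filter.mpr ⟨mem_univ j, hj₀ j hj⟩
    exact absurd (s.min'_le _ this) (not_le.mpr hj₀lt)
  calc k ≤ c x₀ := hkc
  _ ≤ _ := by
      apply card_le_card
      intro i hi
      have hix : z i ≤ x₀ := (mem_filter.mp hi).2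
      refine mem_filter.mpr ⟨mem_univ i, ?_⟩
      calc (univ.filter (fun j => z j < z i)).card
          ≤ (univ.filter (fun j => z j < x₀)).card := by
            apply card_le_card
            intro j hj
            exact mem_filter.mpr ⟨mem_univ j, lt_of_lt_of_le (mem_filter.mp hj).2 hix⟩
      _ < k := key

lemma snoc_count (n : ℕ) (z : Fin n → ℝ) (r : ℝ) :
    (univ.filter (fun i : Fin (n+1) =>
        (Fin.snoc (fun i => ((z i : ℝ) : EReal)) ⊤ : Fin (n+1) → EReal) i ≤ (r:EReal))).card
      = (univ.filter (fun i : Fin n => z i ≤ r)).card := by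
  classical
  simp only [card_filter]
  rw [Fin.sum_univ_castSucc]
  simp [Fin.snoc_castSucc, Fin.snoc_last, top_le_iff, EReal.coe_le_coe_iff]


lemma quantile_iff (n : ℕ) (z : Fin n → ℝ) (β : ℝ) (hβ : 0 < β) (y : ℝ) :
    ((y : EReal) ≤ augQuantile z β ↔
      (univ.filter (fun j => z j < y)).card < ⌈β * (n+1)⌉₊) := by
  classical
  set k := ⌈β * (n+1)⌉₊ with hk
  have hk1 : 1 ≤ k := Nat.one_le_ceil_iff.mpr (by positivity)
  have hA : ∀ r : ℝ, (β ≤ ((univ.filter (fun i : Fin (n+1) =>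
      (Fin.snoc (fun i => ((z i : ℝ) : EReal)) ⊤ : Fin (n+1) → EReal) i ≤ (r:EReal))).card : ℝ) / ((n+1 : ℕ) : ℝ))
      ↔ k ≤ (univ.filter (fun i : Fin n => z i ≤ r)).card := by
    intro r
    rw [snoc_count, le_div_iff₀ (by positivity), hk, Nat.ceil_le]
    push_cast
    ring_nf
  rw [augQuantile, empQuantile, le_sInf_iff]
  constructor
  · intro h
    by_contra hcon
    push_neg at hcon
    have hne : (univ.filter (fun j => z j < y)).Nonempty := by
      rw [← card_pos]; exact lt_of_lt_of_le hk1 hcon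
    obtain ⟨j₀, hj₀mem, hj₀⟩ := exists_max_image _ z hne
    have hj₀lt : z j₀ < y := (mem_filter.mp hj₀mem).2
    have hmem : (z j₀ : EReal) ∈ ((fun r : ℝ => (r : EReal)) ''
        {r : ℝ | β ≤ ((Finset.univ.filter (fun i =>
          (Fin.snoc (fun i => ((z i : ℝ) : EReal)) ⊤ : Fin (n+1) → EReal) i ≤ (r : EReal))).card : ℝ) / ((n+1 : ℕ) : ℝ)}) := by
      refine ⟨z j₀, ?_, rfl⟩
      rw [Set.mem_setOf_eq, hA]
      calc k ≤ (univ.filter (fun j => z j < y)).card := hcon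
      _ ≤ _ := by
          apply card_le_card
          intro j hj
          exact mem_filter.mpr ⟨mem_univ j, hj₀ j hj⟩
    have := h _ hmem
    exact absurd this (by exact_mod_cast not_le.mpr hj₀lt)
  · rintro h x ⟨r, hr, rfl⟩
    rw [Set.mem_setOf_eq, hA] at hr
    by_contra hyr
    push_neg at hyr
    have hry : r < y := by exact_mod_cast hyr
    have : (univ.filter (fun i : Fin n => z i ≤ r)).card
        ≤ (univ.filter (fun j => z j < y)).card := by
      apply card_le_card
      intro j hj
      exact mem_filter.mpr ⟨mem_univ j, lt_of_le_of_lt (mem_filter.mp hj).2 hry⟩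
    omega

lemma card_filter_perm {m : ℕ} (π : Equiv.Perm (Fin m)) (p : Fin m → Prop) [DecidablePred p] :
    (univ.filter (fun j => p (π j))).card = (univ.filter p).card := by
  apply Finset.card_bij (fun j _ => π j)
  · intro a ha
    simp only [mem_filter, mem_univ, true_and] at ha ⊢
    exact ha
  · intro a _ b _ h
    exact π.injective h
  · intro b hb
    exact ⟨π.symm b, by simp [(mem_filter.mp hb).2], by simp⟩

theorem stmt1 {Ω : Type*} [MeasurableSpace Ω] (P : Measure Ω) [IsProbabilityMeasure P]
    (n : ℕ) (Z : Fin (n + 1) → Ω → ℝ) (hmeas : ∀ i, Measurable (Z i))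
    (hexch : Exchangeable P Z)
    (β : ℝ) (hβ0 : 0 ≤ β) (hβ1 : β ≤ 1) :
    ENNReal.ofReal β ≤
      P {ω | (Z (Fin.last n) ω : EReal) ≤
          augQuantile (fun i : Fin n => Z (Fin.castSucc i) ω) β} := by
  classical
  rcases eq_or_lt_of_le hβ0 with h0 | hβ
  · simp [← h0]
  set k := ⌈β * (n+1)⌉₊ with hk
  have hk1 : 1 ≤ k := Nat.one_le_ceil_iff.mpr (by positivity)
  have hkn : k ≤ n + 1 := by
    rw [hk, Nat.ceil_le]
    push_cast
    nlinarith
  -- the events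
  set A : Fin (n+1) → Set Ω := fun i =>
    {ω | (univ.filter (fun j : Fin (n+1) => Z j ω < Z i ω)).card < k} with hA
  have hcardmeas : ∀ i, Measurable (fun ω =>
      (univ.filter (fun j : Fin (n+1) => Z j ω < Z i ω)).card) := by
    intro i
    have : (fun ω => (univ.filter (fun j : Fin (n+1) => Z j ω < Z i ω)).card)
        = fun ω => ∑ j : Fin (n+1), if Z j ω < Z i ω then 1 else 0 := by
      funext ω; rw [card_filter]
    rw [this]
    exact Finset.measurable_sum _ fun j _ =>
      Measurable.ite (measurableSet_lt (hmeas j) (hmeas i)) measurable_const measurable_const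
  have hAmeas : ∀ i, MeasurableSet (A i) := by
    intro i
    exact (hcardmeas i) (measurableSet_Iio (a := k))
  -- the target set equals A (last n)
  have htarget : {ω | (Z (Fin.last n) ω : EReal) ≤
      augQuantile (fun i : Fin n => Z (Fin.castSucc i) ω) β} = A (Fin.last n) := by
    ext ω
    rw [Set.mem_setOf_eq, quantile_iff n _ β hβ]
    have : (univ.filter (fun j : Fin n => Z (Fin.castSucc j) ω < Z (Fin.last n) ω)).card
        = (univ.filter (fun j : Fin (n+1) => Z j ω < Z (Fin.last n) ω)).card := by
      rw [card_filter, card_filter, Fin.sum_univ_castSucc]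
      simp
    rw [this]
    rfl
  -- all events have the same probability
  have hperm : ∀ i, P (A i) = P (A (Fin.last n)) := by
    intro i
    set π := Equiv.swap i (Fin.last n) with hπ
    have hswap := hexch π
    set S : Set (Fin (n+1) → ℝ) :=
      {w | (univ.filter (fun j => w j < w (Fin.last n))).card < k} with hS
    have hSmeas : MeasurableSet S := by
      have hc : Measurable (fun w : Fin (n+1) → ℝ =>
          (univ.filter (fun j => w j < w (Fin.last n))).card) := by
        have : (fun w : Fin (n+1) → ℝ =>
            (univ.filter (fun j => w j < w (Fin.last n))).card)
            = fun w => ∑ j : Fin (n+1), if w j < w (Fin.last n) then 1 else 0 := by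
          funext w; rw [card_filter]
        rw [this]
        exact Finset.measurable_sum _ fun j _ =>
          Measurable.ite (measurableSet_lt (measurable_pi_apply j) (measurable_pi_apply _))
            measurable_const measurable_const
      exact hc (measurableSet_Iio (a := k))
    have hvec : Measurable (fun ω => fun j => Z j ω) := measurable_pi_lambda _ hmeas
    have hvecπ : Measurable (fun ω => fun j => Z (π j) ω) :=
      measurable_pi_lambda _ fun j => hmeas _
    have h1 : Measure.map (fun ω => fun j => Z (π j) ω) P S
        = Measure.map (fun ω => fun j => Z j ω) P S := by rw [hswap]
    rw [Measure.map_apply hvecπ hSmeas, Measure.map_apply hvec hSmeas] at h1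
    have h2 : (fun ω => fun j => Z j ω) ⁻¹' S = A (Fin.last n) := rfl
    have h3 : (fun ω => fun j => Z (π j) ω) ⁻¹' S = A i := by
      ext ω
      simp only [Set.mem_preimage, hS, Set.mem_setOf_eq, hA]
      simp only [hπ, Equiv.swap_apply_right]
      rw [card_filter_perm (Equiv.swap i (Fin.last n)) (fun j => Z j ω < Z i ω)]
    rw [h2, h3] at h1
    exact h1
  -- pointwise counting bound
  have hpoint : ∀ ω, (k : ℝ≥0∞) ≤ ∑ i : Fin (n+1),
      Set.indicator (A i) (fun _ => (1 : ℝ≥0∞)) ω := by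
    intro ω
    have hcl := countLemma hk1 hkn (fun i => Z i ω)
    calc (k : ℝ≥0∞) ≤ ((univ.filter (fun i : Fin (n+1) =>
          (univ.filter (fun j => Z j ω < Z i ω)).card < k)).card : ℝ≥0∞) := by
          exact_mod_cast hcl
    _ = ∑ i : Fin (n+1), Set.indicator (A i) (fun _ => (1 : ℝ≥0∞)) ω := by
        rw [card_filter]
        push_cast
        apply Finset.sum_congr rfl
        intro i _
        by_cases h : (univ.filter (fun j => Z j ω < Z i ω)).card < k
        · rw [if_pos h]
          exact (Set.indicator_of_mem (show ω ∈ A i from h) (fun _ => (1 : ℝ≥0∞))).symm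
        · rw [if_neg h]
          exact (Set.indicator_of_notMem (show ω ∉ A i from h) (fun _ => (1 : ℝ≥0∞))).symm
  -- integrate
  have hsum : (k : ℝ≥0∞) ≤ ∑ i : Fin (n+1), P (A i) := by
    have h1 : (k : ℝ≥0∞) = ∫⁻ _, (k : ℝ≥0∞) ∂P := by simp
    rw [h1]
    calc ∫⁻ _, (k : ℝ≥0∞) ∂P
        ≤ ∫⁻ ω, ∑ i : Fin (n+1), Set.indicator (A i) (fun _ => (1 : ℝ≥0∞)) ω ∂P :=
          lintegral_mono hpoint
    _ = ∑ i : Fin (n+1), ∫⁻ ω, Set.indicator (A i) (fun _ => (1 : ℝ≥0∞)) ω ∂P :=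
          lintegral_finset_sum _ fun i _ => (measurable_const.indicator (hAmeas i))
    _ = ∑ i : Fin (n+1), P (A i) := by
          apply Finset.sum_congr rfl
          intro i _
          rw [lintegral_indicator (hAmeas i)]
          simp
  have hsum2 : (k : ℝ≥0∞) ≤ (n + 1 : ℕ) * P (A (Fin.last n)) := by
    calc (k : ℝ≥0∞) ≤ ∑ i : Fin (n+1), P (A i) := hsum
    _ = ∑ _i : Fin (n+1), P (A (Fin.last n)) := Finset.sum_congr rfl fun i _ => hperm i
    _ = (n + 1 : ℕ) * P (A (Fin.last n)) := by
        rw [Finset.sum_const, card_univ, Fintype.card_fin, nsmul_eq_mul]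
  rw [htarget]
  have hmul : ENNReal.ofReal β * (n + 1 : ℕ) ≤ P (A (Fin.last n)) * (n + 1 : ℕ) := by
    calc ENNReal.ofReal β * (n + 1 : ℕ)
        = ENNReal.ofReal (β * (n + 1 : ℕ)) := by
          rw [ENNReal.ofReal_mul hβ0, ENNReal.ofReal_natCast]
    _ ≤ ENNReal.ofReal k := by
          apply ENNReal.ofReal_le_ofReal
          push_cast
          exact Nat.le_ceil _
    _ = (k : ℝ≥0∞) := ENNReal.ofReal_natCast k
    _ ≤ (n + 1 : ℕ) * P (A (Fin.last n)) := hsum2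
    _ = P (A (Fin.last n)) * (n + 1 : ℕ) := mul_comm _ _
  exact (ENNReal.mul_le_mul_iff_left (by exact_mod_cast Nat.succ_ne_zero n)
    (ENNReal.natCast_ne_top _)).mp hmul
end

section
/- Equality case of the functional highest-density optimality: with λ Lebesgue measure on ℝ^d, f a probability density, α ∈ (0,1), τ_α > 0, C^HD_α := { y : f(y) ≥ τ_α } satisfying ∫_{C^HD_α} f dλ = 1 − α, and assuming additionally λ({ y : f(y) = τ_α }) = 0, if a measurable function g : ℝ^d → [0,1] satisfies ∫ g·f dλ ≥ 1 − α and ∫ g dλ = λ(C^HD_α), then g = 1_{C^HD_α} λ-almost everywhere. -/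
/-!
Bathtub argument. With `C = {τ ≤ f}`, the function `(1_C - g) (f - τ)` is pointwise
nonnegative for `0 ≤ g ≤ 1`, and its integral is `(∫_C f - ∫ g f) - τ (λ C - ∫ g) ≤ 0`.
Hence it vanishes almost everywhere, and off the null level set `{f = τ}` this forces
`g = 1_C`.
-/

open MeasureTheory Set
open scoped ENNReal

namespace HighestDensity

variable {Ω : Type*} {f g : Ω → ℝ} {τ : ℝ}

lemma indicator_superlevel_sub_mul_sub_nonneg {y : Ω} (hg : g y ∈ Icc 0 1) :
    0 ≤ ({y | τ ≤ f y}.indicator (fun _ => (1 : ℝ)) y - g y) * (f y - τ) := by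
  by_cases hy : τ ≤ f y
  · rw [indicator_of_mem (show y ∈ {y | τ ≤ f y} from hy)]
    exact mul_nonneg (sub_nonneg.2 hg.2) (sub_nonneg.2 hy)
  · rw [indicator_of_notMem (show y ∉ {y | τ ≤ f y} from hy), zero_sub]
    exact mul_nonneg_of_nonpos_of_nonpos (neg_nonpos.2 hg.1) (by linarith [not_le.1 hy])

lemma indicator_sub_mul_sub_eq (C : Set Ω) (y : Ω) :
    (C.indicator (fun _ => (1 : ℝ)) y - g y) * (f y - τ)
      = (C.indicator f y - g y * f y) - τ * (C.indicator (fun _ => 1) y - g y) := by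
  by_cases hy : y ∈ C <;> simp [hy] <;> ring

variable [MeasurableSpace Ω] {μ : Measure Ω}

lemma measure_superlevel_lt_top (hf : Integrable f μ) (hτ : 0 < τ) :
    μ {y | τ ≤ f y} < ∞ :=
  (measure_mono fun _ hy => le_trans hy (Real.le_norm_self _)).trans_lt
    (hf.measure_norm_ge_lt_top hτ)

lemma integrable_and_integral_indicator_sub_mul_sub {C : Set Ω} (hC : MeasurableSet C)
    (hCfin : μ C < ∞) (hf : Integrable f μ) (hg : Integrable g μ)
    (hgf : Integrable (fun y => g y * f y) μ) :
    Integrable (fun y => (C.indicator (fun _ => (1 : ℝ)) y - g y) * (f y - τ)) μ ∧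
    ∫ y, (C.indicator (fun _ => (1 : ℝ)) y - g y) * (f y - τ) ∂μ
      = (∫ y in C, f y ∂μ - ∫ y, g y * f y ∂μ) - τ * (μ.real C - ∫ y, g y ∂μ) := by
  have h1 : Integrable (C.indicator fun _ => (1 : ℝ)) μ :=
    (integrable_indicator_iff hC).2 (integrableOn_const hCfin.ne)
  have hA : Integrable (fun y => C.indicator f y - g y * f y) μ := (hf.indicator hC).sub hgf
  have hB : Integrable (fun y => τ * (C.indicator (fun _ => (1 : ℝ)) y - g y)) μ :=
    (h1.sub hg).const_mul τ
  simp_rw [indicator_sub_mul_sub_eq C]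
  refine ⟨hA.sub hB, ?_⟩
  rw [integral_sub hA hB, integral_sub (hf.indicator hC) hgf, integral_const_mul,
    integral_sub h1 hg, integral_indicator hC, integral_indicator_const _ hC, smul_eq_mul, mul_one]

theorem ae_indicator_superlevel_sub_mul_sub_eq_zero (hf : Integrable f μ) (hfm : Measurable f)
    (hτ : 0 < τ) (hgm : Measurable g) (hg01 : ∀ y, g y ∈ Icc 0 1)
    (hmass : ∫ y in {y | τ ≤ f y}, f y ∂μ ≤ ∫ y, g y * f y ∂μ)
    (hvol : ∫⁻ y, ENNReal.ofReal (g y) ∂μ ≤ μ {y | τ ≤ f y}) :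
    ∀ᵐ y ∂μ, ({y | τ ≤ f y}.indicator (fun _ => (1 : ℝ)) y - g y) * (f y - τ) = 0 := by
  have hCfin := measure_superlevel_lt_top hf hτ
  have hg0 : 0 ≤ᵐ[μ] g := ae_of_all _ fun y => (hg01 y).1
  have hg : Integrable g μ :=
    ⟨hgm.aestronglyMeasurable, (hasFiniteIntegral_iff_ofReal hg0).2 (hvol.trans_lt hCfin)⟩
  have hgf : Integrable (fun y => g y * f y) μ :=
    hf.bdd_mul hgm.aestronglyMeasurable
      (ae_of_all _ fun y => by rw [Real.norm_of_nonneg (hg01 y).1]; exact (hg01 y).2)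
  have hgvol : ∫ y, g y ∂μ ≤ μ.real {y | τ ≤ f y} := by
    rw [integral_eq_lintegral_of_nonneg_ae hg0 hgm.aestronglyMeasurable]
    exact ENNReal.toReal_mono hCfin.ne hvol
  have hnonneg := fun y => indicator_superlevel_sub_mul_sub_nonneg (f := f) (τ := τ) (hg01 y)
  obtain ⟨hint, heq⟩ := integrable_and_integral_indicator_sub_mul_sub (τ := τ)
    (measurableSet_le measurable_const hfm) hCfin hf hg hgf
  refine (integral_eq_zero_iff_of_nonneg hnonneg hint).1 (le_antisymm ?_ (integral_nonneg hnonneg))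
  rw [heq]
  nlinarith

end HighestDensity

open HighestDensity in
theorem stmt7_general (d : ℕ) (f : (Fin d → ℝ) → ℝ)
    (hf_meas : Measurable f)
    (hf_int : Integrable f)
    (α τ : ℝ) (hτ : 0 < τ)
    (hHD : ∫ y in {y | τ ≤ f y}, f y = 1 - α)
    (hlevel : volume {y | f y = τ} = 0)
    (g : (Fin d → ℝ) → ℝ) (hg_meas : Measurable g)
    (hg01 : ∀ y, g y ∈ Set.Icc (0 : ℝ) 1)
    (hgmass : 1 - α ≤ ∫ y, g y * f y)
    (hgvol : ∫⁻ y, ENNReal.ofReal (g y) = volume {y | τ ≤ f y}) :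
    ∀ᵐ y ∂(volume : Measure (Fin d → ℝ)),
      g y = Set.indicator {y | τ ≤ f y} (fun _ => (1 : ℝ)) y := by
  filter_upwards [ae_indicator_superlevel_sub_mul_sub_eq_zero hf_int hf_meas hτ hg_meas hg01
    (hHD.trans_le hgmass) hgvol.le, measure_eq_zero_iff_ae_notMem.1 hlevel] with y hy hne
  rcases mul_eq_zero.1 hy with h | h
  · exact (sub_eq_zero.1 h).symm
  · exact absurd (sub_eq_zero.1 h) hne

/-- Equality case of the functional highest-density optimality: if moreover the level
set `{ y : f y = τ }` is Lebesgue-null, a measurable `g : ℝ^d → [0,1]` with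
`∫ g·f dλ ≥ 1 - α` and `∫ g dλ = λ(C^HD_α)` equals the indicator of `C^HD_α`
λ-almost everywhere. -/
theorem stmt7 (d : ℕ) (f : (Fin d → ℝ) → ℝ)
    (hf_meas : Measurable f) (hf_nonneg : ∀ y, 0 ≤ f y)
    (hf_int : Integrable f) (hf_prob : ∫ y, f y = 1)
    (α τ : ℝ) (hα : α ∈ Set.Ioo (0 : ℝ) 1) (hτ : 0 < τ)
    (hHD : ∫ y in {y | τ ≤ f y}, f y = 1 - α)
    (hlevel : volume {y | f y = τ} = 0)
    (g : (Fin d → ℝ) → ℝ) (hg_meas : Measurable g)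
    (hg01 : ∀ y, g y ∈ Set.Icc (0 : ℝ) 1)
    (hgmass : 1 - α ≤ ∫ y, g y * f y)
    (hgvol : ∫⁻ y, ENNReal.ofReal (g y) = volume {y | τ ≤ f y}) :
    ∀ᵐ y ∂(volume : Measure (Fin d → ℝ)),
      g y = Set.indicator {y | τ ≤ f y} (fun _ => (1 : ℝ)) y :=
  stmt7_general d f hf_meas hf_int α τ hτ hHD hlevel g hg_meas hg01 hgmass hgvol
end

section
/- Random-set form of the highest-density optimality: with λ Lebesgue measure on ℝ^d, f a probability density, α ∈ (0,1), τ_α > 0, and C^HD_α := { y : f(y) ≥ τ_α } satisfying ∫_{C^HD_α} f dλ = 1 − α, let (Ω, 𝔽, P) be a probability space and B ⊆ Ω × ℝ^d a set measurable with respect to the product σ-algebra, with ω-sections C_ω := { y : (ω, y) ∈ B }. If ∫_Ω ( ∫_{C_ω} f dλ ) dP(ω) ≥ 1 − α, then ∫_Ω λ(C_ω) dP(ω) ≥ λ(C^HD_α). -/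
open MeasureTheory

/-- Random-set form of the highest-density optimality: for a jointly measurable random
set `B ⊆ Ω × ℝ^d` with sections `C_ω = { y : (ω, y) ∈ B }`, if the expected `f`-mass
of `C_ω` is at least `1 - α`, then the expected Lebesgue measure of `C_ω` is at least
`λ(C^HD_α)`. -/
theorem stmt8 (d : ℕ) (f : (Fin d → ℝ) → ℝ)
    (hf_meas : Measurable f) (hf_nonneg : ∀ y, 0 ≤ f y)
    (hf_int : Integrable f) (hf_prob : ∫ y, f y = 1)
    (α τ : ℝ) (hα : α ∈ Set.Ioo (0 : ℝ) 1) (hτ : 0 < τ)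
    (hHD : ∫ y in {y | τ ≤ f y}, f y = 1 - α)
    {Ω : Type*} [MeasurableSpace Ω] (P : Measure Ω) [IsProbabilityMeasure P]
    (B : Set (Ω × (Fin d → ℝ))) (hB : MeasurableSet B)
    (hmass : 1 - α ≤ ∫ ω, (∫ y in {y | (ω, y) ∈ B}, f y) ∂P) :
    volume {y | τ ≤ f y} ≤ ∫⁻ ω, volume {y | (ω, y) ∈ B} ∂P := by
  set g : (Fin d → ℝ) → ENNReal := fun y => ENNReal.ofReal (f y) with hg
  have hg_meas : Measurable g := hf_meas.ennreal_ofReal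
  set ν : Measure (Fin d → ℝ) := volume.withDensity g with hν
  set C : Set (Fin d → ℝ) := {y | τ ≤ f y} with hC
  have hCmeas : MeasurableSet C := measurableSet_le measurable_const hf_meas
  have hfnn : 0 ≤ᵐ[volume] f := Filter.Eventually.of_forall hf_nonneg
  -- ν of a measurable set
  have hν_apply : ∀ (S : Set (Fin d → ℝ)), MeasurableSet S → ν S = ∫⁻ y in S, g y :=
    fun S hS => withDensity_apply g hS
  have hν_univ : ν Set.univ = 1 := by
    rw [hν_apply _ MeasurableSet.univ, Measure.restrict_univ,
      ← ofReal_integral_eq_lintegral_ofReal hf_int hfnn, hf_prob, ENNReal.ofReal_one]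
  have hνfin : IsFiniteMeasure ν := ⟨by rw [hν_univ]; exact ENNReal.one_lt_top⟩
  have hνC : ν C = ENNReal.ofReal (1 - α) := by
    rw [hν_apply _ hCmeas, ← ofReal_integral_eq_lintegral_ofReal hf_int.restrict
      (Filter.Eventually.of_forall hf_nonneg), hHD]
  -- sections
  have hsec : ∀ ω, MeasurableSet {y | (ω, y) ∈ B} := fun ω =>
    (measurable_prodMk_left (m := inferInstance)) hB
  -- key pointwise inequality
  have key : ∀ (S : Set (Fin d → ℝ)), MeasurableSet S →
      ENNReal.ofReal τ * volume C + ν S ≤ ENNReal.ofReal τ * volume S + ν C := by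
    intro S hS
    have h1 : ENNReal.ofReal τ * volume (C \ S) ≤ ν (C \ S) := by
      rw [hν_apply _ (hCmeas.diff hS), ← setLIntegral_const]
      refine setLIntegral_mono hg_meas fun y hy => ?_
      exact ENNReal.ofReal_le_ofReal hy.1
    have h2 : ν (S \ C) ≤ ENNReal.ofReal τ * volume (S \ C) := by
      rw [hν_apply _ (hS.diff hCmeas), ← setLIntegral_const]
      refine setLIntegral_mono measurable_const fun y hy => ?_
      exact ENNReal.ofReal_le_ofReal (le_of_lt (lt_of_not_ge hy.2))
    have eC : volume C = volume (C ∩ S) + volume (C \ S) :=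
      (measure_inter_add_diff C hS).symm
    have eS : volume S = volume (S ∩ C) + volume (S \ C) :=
      (measure_inter_add_diff S hCmeas).symm
    have eνC : ν C = ν (C ∩ S) + ν (C \ S) := (measure_inter_add_diff C hS).symm
    have eνS : ν S = ν (S ∩ C) + ν (S \ C) := (measure_inter_add_diff S hCmeas).symm
    rw [eC, eS, eνC, eνS, Set.inter_comm S C, mul_add, mul_add]
    calc ENNReal.ofReal τ * volume (C ∩ S) + ENNReal.ofReal τ * volume (C \ S)
        + (ν (C ∩ S) + ν (S \ C))
        ≤ ENNReal.ofReal τ * volume (C ∩ S) + ν (C \ S)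
          + (ν (C ∩ S) + ENNReal.ofReal τ * volume (S \ C)) := by
          gcongr
      _ = ENNReal.ofReal τ * volume (C ∩ S) + ENNReal.ofReal τ * volume (S \ C)
          + (ν (C ∩ S) + ν (C \ S)) := by ring
  -- measurability of ω ↦ ν (section)
  haveI := hνfin
  have hmeasν : Measurable fun ω => ν {y | (ω, y) ∈ B} :=
    measurable_measure_prodMk_left (ν := ν) hB
  have hmeasvol : Measurable fun ω => volume {y | (ω, y) ∈ B} :=
    measurable_measure_prodMk_left hB
  -- ν of section ≤ 1
  have hνle1 : ∀ ω, ν {y | (ω, y) ∈ B} ≤ 1 := fun ω => by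
    rw [← hν_univ]; exact measure_mono (Set.subset_univ _)
  -- the mass condition in lintegral form
  have hI : ENNReal.ofReal (1 - α) ≤ ∫⁻ ω, ν {y | (ω, y) ∈ B} ∂P := by
    have heq : ∀ ω, (∫ y in {y | (ω, y) ∈ B}, f y) = (ν {y | (ω, y) ∈ B}).toReal := by
      intro ω
      rw [hν_apply _ (hsec ω), ← ofReal_integral_eq_lintegral_ofReal hf_int.restrict
        (Filter.Eventually.of_forall hf_nonneg), ENNReal.toReal_ofReal]
      exact integral_nonneg fun y => hf_nonneg y
    have htoReal : ∫ ω, (∫ y in {y | (ω, y) ∈ B}, f y) ∂P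
        = (∫⁻ ω, ν {y | (ω, y) ∈ B} ∂P).toReal := by
      simp_rw [heq]
      exact integral_toReal hmeasν.aemeasurable
        (Filter.Eventually.of_forall fun ω => lt_of_le_of_lt (hνle1 ω) ENNReal.one_lt_top)
    exact ENNReal.ofReal_le_of_le_toReal (by rw [← htoReal]; exact hmass)
  have hIle1 : ∫⁻ ω, ν {y | (ω, y) ∈ B} ∂P ≤ 1 := by
    calc ∫⁻ ω, ν {y | (ω, y) ∈ B} ∂P ≤ ∫⁻ _, 1 ∂P := lintegral_mono hνle1
      _ = 1 := by simp
  -- integrate the key inequality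
  have main : ENNReal.ofReal τ * volume C + ∫⁻ ω, ν {y | (ω, y) ∈ B} ∂P
      ≤ ENNReal.ofReal τ * ∫⁻ ω, volume {y | (ω, y) ∈ B} ∂P + ν C := by
    have := lintegral_mono (μ := P)
      (f := fun ω => ENNReal.ofReal τ * volume C + ν {y | (ω, y) ∈ B})
      (g := fun ω => ENNReal.ofReal τ * volume {y | (ω, y) ∈ B} + ν C)
      (fun ω => key _ (hsec ω))
    rwa [lintegral_add_left measurable_const, lintegral_add_right _ measurable_const,
      lintegral_const, lintegral_const, measure_univ, mul_one, mul_one,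
      lintegral_const_mul _ hmeasvol] at this
  have hcancel : ENNReal.ofReal τ * volume C
      ≤ ENNReal.ofReal τ * ∫⁻ ω, volume {y | (ω, y) ∈ B} ∂P := by
    have h2 : ENNReal.ofReal τ * volume C + ∫⁻ ω, ν {y | (ω, y) ∈ B} ∂P
        ≤ ENNReal.ofReal τ * ∫⁻ ω, volume {y | (ω, y) ∈ B} ∂P
          + ∫⁻ ω, ν {y | (ω, y) ∈ B} ∂P := le_trans main (by rw [hνC]; gcongr)
    exact (ENNReal.add_le_add_iff_right (lt_of_le_of_lt hIle1 ENNReal.one_lt_top).ne).mp h2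
  have hτne : ENNReal.ofReal τ ≠ 0 := by
    simp [ENNReal.ofReal_eq_zero, not_le, hτ]
  exact (ENNReal.mul_le_mul_iff_right hτne ENNReal.ofReal_ne_top).mp hcancel
end

section
/- Order-statistic characterization of the augmented empirical quantile: let z_1, …, z_n be pairwise distinct real numbers, β ∈ (0,1], and k := ⌈β(n+1)⌉. If k ≤ n, then Q_β(z_1, …, z_n, +∞) equals the k-th smallest element of {z_1, …, z_n}; if k = n+1, then the defining set { x ∈ ℝ : (1/(n+1))·#{ i : z_i ≤ x, including the value +∞ } ≥ β } is empty and Q_β(z_1, …, z_n, +∞) = +∞. -/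
open MeasureTheory

lemma card_aug (n : ℕ) (z : Fin n → ℝ) (r : ℝ) :
    (Finset.univ.filter (fun i : Fin (n+1) =>
      (Fin.snoc (fun j : Fin n => ((z j : ℝ) : EReal)) (⊤:EReal) : Fin (n+1) → EReal) i ≤ (r:EReal))).card
    = (Finset.univ.filter (fun j : Fin n => z j ≤ r)).card := by
  rw [Finset.card_filter, Finset.card_filter, Fin.sum_univ_castSucc]
  simp [Fin.snoc_castSucc, Fin.snoc_last, top_le_iff, EReal.coe_le_coe_iff]

lemma exists_order_stat (n : ℕ) (z : Fin n → ℝ) (hz : Function.Injective z)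
    (k : ℕ) (hk1 : 1 ≤ k) (hkn : k ≤ n) :
    ∃ i : Fin n, (Finset.univ.filter (fun j => z j ≤ z i)).card = k := by
  set f : Fin n → ℕ := fun i => (Finset.univ.filter (fun j => z j ≤ z i)).card with hf
  have hinj : Function.Injective f := by
    intro i i' h
    by_contra hne
    have hne' : z i ≠ z i' := fun e => hne (hz e)
    wlog hlt : z i < z i' generalizing i i'
    · exact this h.symm (Ne.symm hne) (Ne.symm hne')
        (lt_of_le_of_ne (not_lt.mp hlt) (Ne.symm hne'))
    have hsub : (Finset.univ.filter (fun j => z j ≤ z i)) ⊂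
        (Finset.univ.filter (fun j => z j ≤ z i')) := by
      refine Finset.ssubset_iff_of_subset ?_ |>.mpr ⟨i', by simp, by simp [not_le.mpr hlt]⟩
      intro j hj
      simp only [Finset.mem_filter, Finset.mem_univ, true_and] at *
      exact hj.trans hlt.le
    exact absurd h (Finset.card_lt_card hsub).ne
  have hmem : ∀ i, f i ∈ Finset.Icc 1 n := by
    intro i
    refine Finset.mem_Icc.mpr ⟨Finset.card_pos.mpr ⟨i, by simp⟩, ?_⟩
    simpa using Finset.card_filter_le Finset.univ (fun j => z j ≤ z i)
  have himg : Finset.univ.image f = Finset.Icc 1 n := by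
    apply Finset.eq_of_subset_of_card_le
    · intro x hx
      obtain ⟨i, _, rfl⟩ := Finset.mem_image.mp hx
      exact hmem i
    · rw [Finset.card_image_of_injective _ hinj]; simp
  have : k ∈ Finset.univ.image f := by rw [himg]; exact Finset.mem_Icc.mpr ⟨hk1, hkn⟩
  obtain ⟨i, _, hi⟩ := Finset.mem_image.mp this
  exact ⟨i, hi⟩

/-- Order-statistic characterization of the augmented empirical quantile: for pairwise
distinct reals `z 1, …, z n`, `β ∈ (0,1]`, and `k = ⌈β(n+1)⌉`: if `k ≤ n` the quantile
is the `k`-th smallest of the `z i` (i.e. the unique `z i` with exactly `k` of the `z j`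
at most `z i`); if `k = n + 1` the defining set is empty and the quantile is `+∞`. -/
theorem stmt14 (n : ℕ) (z : Fin n → ℝ) (hz : Function.Injective z)
    (β : ℝ) (hβ : β ∈ Set.Ioc (0 : ℝ) 1) (k : ℕ) (hk : k = ⌈β * (n + 1)⌉₊) :
    (k ≤ n → ∃ i : Fin n, augQuantile z β = ((z i : ℝ) : EReal) ∧
        (Finset.univ.filter (fun j => z j ≤ z i)).card = k) ∧
    (k = n + 1 →
      {x : ℝ | β ≤ ((Finset.univ.filter (fun i : Fin (n + 1) =>
            (Fin.snoc (fun j : Fin n => ((z j : ℝ) : EReal)) (⊤ : EReal) :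
                Fin (n + 1) → EReal) i ≤ (x : EReal))).card : ℝ) / (n + 1)} = ∅ ∧
      augQuantile z β = ⊤) := by
  obtain ⟨hβ0, hβ1⟩ := hβ
  have key : ∀ r : ℝ, (β ≤ ((Finset.univ.filter (fun i : Fin (n+1) =>
      (Fin.snoc (fun j : Fin n => ((z j : ℝ) : EReal)) (⊤:EReal) : Fin (n+1) → EReal) i
        ≤ (r:EReal))).card : ℝ) / (n+1)) ↔
      k ≤ (Finset.univ.filter (fun j => z j ≤ r)).card := by
    intro r
    rw [card_aug, le_div_iff₀ (by positivity), hk, ← Nat.cast_le (α := ℝ)]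
    exact ⟨fun h => (Nat.ceil_le.mpr h).trans le_rfl |> fun h' => Nat.cast_le.mpr h' |>.trans le_rfl,
      fun h => le_trans (Nat.le_ceil _) h⟩
  have hquant : augQuantile z β = sInf ((fun r : ℝ => (r : EReal)) ''
      {r : ℝ | k ≤ (Finset.univ.filter (fun j => z j ≤ r)).card}) := by
    rw [augQuantile, empQuantile]
    congr 1
    ext x
    simp only [Set.mem_image, Set.mem_setOf_eq]
    push_cast
    exact ⟨fun ⟨r, hr, he⟩ => ⟨r, (key r).mp hr, he⟩, fun ⟨r, hr, he⟩ => ⟨r, (key r).mpr hr, he⟩⟩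
  constructor
  · intro hkn
    have hk1 : 1 ≤ k := by
      rw [hk]; exact Nat.one_le_ceil_iff.mpr (by positivity)
    obtain ⟨i, hi⟩ := exists_order_stat n z hz k hk1 hkn
    refine ⟨i, ?_, hi⟩
    rw [hquant]
    apply le_antisymm
    · exact sInf_le ⟨z i, by simp [hi], rfl⟩
    · apply le_sInf
      rintro x ⟨r, hr, rfl⟩
      simp only [Set.mem_setOf_eq] at hr
      rw [EReal.coe_le_coe_iff]
      by_contra hlt
      push_neg at hlt
      have hsub : (Finset.univ.filter (fun j => z j ≤ r)) ⊆
          (Finset.univ.filter (fun j => z j ≤ z i)).erase i := by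
        intro j hj
        simp only [Finset.mem_filter, Finset.mem_univ, true_and, Finset.mem_erase] at *
        refine ⟨fun he => ?_, hj.trans hlt.le⟩
        subst he; exact absurd hj (not_le.mpr hlt)
      have hcard := Finset.card_le_card hsub
      rw [Finset.card_erase_of_mem (by simp), hi] at hcard
      omega
  · intro hkn1
    have hempty : {x : ℝ | β ≤ ((Finset.univ.filter (fun i : Fin (n + 1) =>
        (Fin.snoc (fun j : Fin n => ((z j : ℝ) : EReal)) (⊤ : EReal) :
            Fin (n + 1) → EReal) i ≤ (x : EReal))).card : ℝ) / (n + 1)} = ∅ := by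
      ext x
      simp only [Set.mem_setOf_eq, Set.mem_empty_iff_false, iff_false]
      intro hx
      have := (key x).mp (by exact_mod_cast hx)
      have hle : (Finset.univ.filter (fun j => z j ≤ x)).card ≤ n := by
        simpa using Finset.card_filter_le Finset.univ (fun j => z j ≤ x)
      omega
    refine ⟨hempty, ?_⟩
    rw [hquant]
    have : {r : ℝ | k ≤ (Finset.univ.filter (fun j => z j ≤ r)).card} = ∅ := by
      ext r
      simp only [Set.mem_setOf_eq, Set.mem_empty_iff_false, iff_false]
      intro hr
      have hle : (Finset.univ.filter (fun j => z j ≤ r)).card ≤ n := by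
        simpa using Finset.card_filter_le Finset.univ (fun j => z j ≤ r)
      omega
    rw [this, Set.image_empty, sInf_empty]
end
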